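/- Define f : (0,1) → ℝ by f(r) = 4·(arctanh r)²·((1−r²)/r)². Then f is strictly decreasing on the interval (0,1). -/

import Mathlib

/-! With `u = 2 · arctanh r = log ((1 + r) / (1 - r))` one has `sinh u = 2r / (1 - r²)`, so
`f r = 4 · (u / sinh u)²`. As `r` runs increasingly through `(0, 1)`, `u` runs increasingly through
`(0, ∞)`, and `sinh u / u` is strictly increasing there: it is the slope of the chord of `sinh` from
`0`, and `sinh` is strictly convex on `[0, ∞)`. -/

/-- Inverse hyperbolic tangent: `arctanh r = ½ · log((1+r)/(1−r))`. -/
noncomputable def arctanh (x : ℝ) : ℝ := (1 / 2) * Real.log ((1 + x) / (1 - x))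

/-- `f r = 4 · (arctanh r)² · ((1 − r²)/r)²`. -/
noncomputable def f (r : ℝ) : ℝ := 4 * (arctanh r) ^ 2 * ((1 - r ^ 2) / r) ^ 2

open Real Set

theorem strictConvexOn_sinh : StrictConvexOn ℝ (Ici 0) sinh := by
  refine StrictMonoOn.strictConvexOn_of_deriv (convex_Ici 0) continuous_sinh.continuousOn ?_
  rw [Real.deriv_sinh, interior_Ici]
  intro x hx y hy hxy
  rw [cosh_lt_cosh, abs_of_pos hx, abs_of_pos hy]
  exact hxy

theorem strictMonoOn_sinh_div_self : StrictMonoOn (fun x => sinh x / x) (Ioi 0) := by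
  intro x hx y hy hxy
  simpa using strictConvexOn_sinh.secant_strict_mono self_mem_Ici (mem_Ici.2 (le_of_lt hx))
    (mem_Ici.2 (le_of_lt hy)) (ne_of_gt hx) (ne_of_gt hy) hxy

theorem strictAntiOn_self_div_sinh : StrictAntiOn (fun x => x / sinh x) (Ioi 0) := by
  intro x hx y hy hxy
  have hsinh : 0 < sinh x / x := div_pos (sinh_pos_iff.mpr hx) hx
  simpa only [inv_div] using inv_strictAnti₀ hsinh (strictMonoOn_sinh_div_self hx hy hxy)

theorem two_mul_arctanh (x : ℝ) : 2 * arctanh x = log ((1 + x) / (1 - x)) := by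
  rw [arctanh]
  ring

theorem strictMonoOn_arctanh : StrictMonoOn arctanh (Ioo (-1) 1) := by
  intro x hx y hy hxy
  have hpos : 0 < (1 + x) / (1 - x) := div_pos (by linarith [hx.1]) (by linarith [hx.2])
  have hlog := log_lt_log hpos (strictMonoOn_one_add_div_one_sub hx hy hxy)
  rw [← two_mul_arctanh, ← two_mul_arctanh] at hlog
  linarith

theorem arctanh_pos {x : ℝ} (hx : x ∈ Ioo 0 1) : 0 < arctanh x := by
  have h := strictMonoOn_arctanh (⟨by norm_num, by norm_num⟩ : (0 : ℝ) ∈ Ioo (-1) 1)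
    ⟨by linarith [hx.1], hx.2⟩ hx.1
  simpa [arctanh] using h

theorem sinh_two_mul_arctanh {x : ℝ} (hx : x ∈ Ioo (-1) 1) :
    sinh (2 * arctanh x) = 2 * x / (1 - x ^ 2) := by
  have h₁ : 0 < 1 + x := by linarith [hx.1]
  have h₂ : 0 < 1 - x := by linarith [hx.2]
  have h₃ : 1 - x ^ 2 ≠ 0 := by nlinarith
  rw [two_mul_arctanh, sinh_log (div_pos h₁ h₂)]
  field_simp
  ring

theorem f_eq_sq_self_div_sinh {x : ℝ} (hx : x ∈ Ioo (-1) 1) :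
    f x = 4 * (2 * arctanh x / sinh (2 * arctanh x)) ^ 2 := by
  rw [f, sinh_two_mul_arctanh hx]
  rcases eq_or_ne x 0 with rfl | hx₀
  · simp
  · field_simp

/-- `f` is strictly decreasing on `(0,1)`. -/
theorem f_strictAntiOn : StrictAntiOn f (Set.Ioo 0 1) := by
  intro a ha b hb hab
  have ha' : a ∈ Ioo (-1) 1 := ⟨by linarith [ha.1], ha.2⟩
  have hb' : b ∈ Ioo (-1) 1 := ⟨by linarith [hb.1], hb.2⟩
  have hua : 0 < 2 * arctanh a := by linarith [arctanh_pos ha]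
  have hub : 0 < 2 * arctanh b := by linarith [arctanh_pos hb]
  have hu : 2 * arctanh a < 2 * arctanh b := by linarith [strictMonoOn_arctanh ha' hb' hab]
  have hpos : 0 < 2 * arctanh b / sinh (2 * arctanh b) := div_pos hub (sinh_pos_iff.mpr hub)
  rw [f_eq_sq_self_div_sinh ha', f_eq_sq_self_div_sinh hb']
  have h := pow_lt_pow_left₀ (strictAntiOn_self_div_sinh hua hub hu) hpos.le two_ne_zero
  linarith
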